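/- For every preorder ≤ on a set, the Democratic set comparison ◁_Dem is reasonable inducing; that is, ◁_Dem on finite sets is irreflexive and transitive, and whenever Γ1 ∪ ... ∪ Γm ◁_Dem Γ for finite sets Γ1,...,Γm, Γ, then Γi ◁_Dem Γ for some i. -/

import Mathlib

namespace ASPIC

/-- An inference rule over the language `L`: a list of antecedents and a consequent. -/
structure InfRule (L : Type) where
  ants : List L
  cons : L

/-- An ASPIC+ argumentation system: a contrariness function, disjoint sets of strict
and defeasible inference rules, and a naming function for (defeasible) rules;
every formula has at least one contradictory. -/
structure ArgSystem (L : Type) where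
  contr : L → Set L
  Rs : Set (InfRule L)
  Rd : Set (InfRule L)
  nm : InfRule L → L
  hdisj : Rs ∩ Rd = ∅
  hcontrad : ∀ φ : L, ∃ ψ : L, ψ ∈ contr φ ∧ φ ∈ contr ψ

/-- A knowledge base: disjoint axioms `Kn` and ordinary premises `Kp`. -/
structure KB (L : Type) where
  Kn : Set L
  Kp : Set L
  hdisj : Kn ∩ Kp = ∅

/-- Argument trees: a premise, or the application of an inference rule to a list of
sub-arguments.  (All such trees are finite.) -/
inductive Arg (L : Type) : Type where
  | prem : L → Arg L
  | app : List (Arg L) → InfRule L → Arg L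

namespace Arg

variable {L : Type}

/-- The conclusion of an argument. -/
def conc : Arg L → L
  | prem φ => φ
  | app _ r => r.cons

/-- The top rule of an argument (none for premises). -/
def topRule : Arg L → Option (InfRule L)
  | prem _ => none
  | app _ r => some r

mutual
  /-- The premises of an argument. -/
  def premises : Arg L → Set L
    | prem φ => {φ}
    | app l _ => premisesL l
  def premisesL : List (Arg L) → Set L
    | [] => ∅
    | a :: as => premises a ∪ premisesL as
end

mutual
  /-- The sub-arguments of an argument (including itself). -/
  def subs : Arg L → Set (Arg L)
    | prem φ => {Arg.prem φ}
    | app l r => subsL l ∪ {Arg.app l r}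
  def subsL : List (Arg L) → Set (Arg L)
    | [] => ∅
    | a :: as => subs a ∪ subsL as
end

mutual
  /-- The rules occurring in an argument. -/
  def rules : Arg L → Set (InfRule L)
    | prem _ => ∅
    | app l r => rulesL l ∪ {r}
  def rulesL : List (Arg L) → Set (InfRule L)
    | [] => ∅
    | a :: as => rules a ∪ rulesL as
end

mutual
  /-- The last defeasible rules of an argument (relative to the set `Rd` of
  defeasible rules). -/
  def lastDefRules (Rd : Set (InfRule L)) : Arg L → Set (InfRule L)
    | prem _ => ∅
    | app l r =>
        let rest := lastDefRulesL Rd l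
        {x | (r ∈ Rd ∧ x = r) ∨ (r ∉ Rd ∧ x ∈ rest)}
  def lastDefRulesL (Rd : Set (InfRule L)) : List (Arg L) → Set (InfRule L)
    | [] => ∅
    | a :: as => lastDefRules Rd a ∪ lastDefRulesL Rd as
end

end Arg

variable {L : Type}

/-- Well-formed arguments on the basis of an argumentation theory `(AS, K)`. -/
inductive IsArg (AS : ArgSystem L) (K : KB L) : Arg L → Prop where
  | prem {φ : L} : φ ∈ K.Kn ∪ K.Kp → IsArg AS K (.prem φ)
  | app {l : List (Arg L)} {r : InfRule L} :
      (∀ a ∈ l, IsArg AS K a) →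
      r ∈ AS.Rs ∪ AS.Rd →
      l.map Arg.conc = r.ants →
      IsArg AS K (.app l r)

/-- The defeasible rules of an argument. -/
def defRules (AS : ArgSystem L) (A : Arg L) : Set (InfRule L) := A.rules ∩ AS.Rd
/-- The strict rules of an argument. -/
def stRules (AS : ArgSystem L) (A : Arg L) : Set (InfRule L) := A.rules ∩ AS.Rs
/-- The ordinary premises of an argument. -/
def premP (K : KB L) (A : Arg L) : Set L := A.premises ∩ K.Kp
/-- The axiom premises of an argument. -/
def premN (K : KB L) (A : Arg L) : Set L := A.premises ∩ K.Kn
/-- An argument is strict if it uses no defeasible rules. -/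
def strictArg (AS : ArgSystem L) (A : Arg L) : Prop := defRules AS A = ∅
/-- An argument is firm if all its premises are axioms. -/
def firmArg (K : KB L) (A : Arg L) : Prop := A.premises ⊆ K.Kn

/-- `φ` is a contrary of `ψ`. -/
def contrary (AS : ArgSystem L) (φ ψ : L) : Prop := φ ∈ AS.contr ψ ∧ ψ ∉ AS.contr φ
/-- `φ` and `ψ` are contradictories of each other. -/
def contrad (AS : ArgSystem L) (φ ψ : L) : Prop := φ ∈ AS.contr ψ ∧ ψ ∈ AS.contr φ

/-- Strict derivability: `SDer AS S φ` iff there is a strict argument for `φ` all of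
whose premises lie in `S` (`S ⊢ φ`). -/
inductive SDer (AS : ArgSystem L) (S : Set L) : L → Prop where
  | prem {φ : L} : φ ∈ S → SDer AS S φ
  | rule {r : InfRule L} : r ∈ AS.Rs → (∀ ψ ∈ r.ants, SDer AS S ψ) → SDer AS S r.cons

/-- `S` is c-consistent: for no pair of contradictories are both strictly derivable. -/
def CCons (AS : ArgSystem L) (S : Set L) : Prop :=
  ∀ φ ψ : L, contrad AS φ ψ → ¬ (SDer AS S φ ∧ SDer AS S ψ)

/-- `S` is minimally c-inconsistent. -/
def MinCIncons (AS : ArgSystem L) (S : Set L) : Prop :=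
  ¬ CCons AS S ∧ ∀ S' ⊂ S, CCons AS S'

/-- Closure under strict rules. -/
inductive ClRs (AS : ArgSystem L) (S : Set L) : L → Prop where
  | base {φ : L} : φ ∈ S → ClRs AS S φ
  | step {r : InfRule L} : r ∈ AS.Rs → (∀ ψ ∈ r.ants, ClRs AS S ψ) → ClRs AS S r.cons

/-- Direct consistency of a set of formulas. -/
def Consistent (AS : ArgSystem L) (S : Set L) : Prop :=
  ¬ ∃ φ ψ : L, φ ∈ S ∧ ψ ∈ S ∧ ψ ∈ AS.contr φ

/-- The argumentation theory is closed under contraposition. -/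
def ContraClosed (AS : ArgSystem L) : Prop :=
  ∀ (S : Set L) (s : L), s ∈ S → ∀ φ : L, SDer AS S φ →
    ∀ nφ : L, contrad AS φ nφ →
      ∃ ns : L, contrad AS s ns ∧ SDer AS ((S \ {s}) ∪ {nφ}) ns

/-- The argumentation theory is closed under transposition. -/
def TransClosed (AS : ArgSystem L) : Prop :=
  ∀ r ∈ AS.Rs, ∀ i : Fin r.ants.length, ∀ nψ : L, contrad AS r.cons nψ →
    ∃ nφ : L, contrad AS (r.ants.get i) nφ ∧
      ({ ants := r.ants.set i.1 nψ, cons := nφ } : InfRule L) ∈ AS.Rs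

/-- Axiom consistency: the strict closure of the axioms is consistent. -/
def AxiomConsistent (AS : ArgSystem L) (K : KB L) : Prop :=
  Consistent AS {φ | ClRs AS K.Kn φ}

/-- c-classicality. -/
def CClassical (AS : ArgSystem L) : Prop :=
  ∀ S : Set L, MinCIncons AS S → ∀ φ ∈ S,
    ∃ nφ : L, contrad AS φ nφ ∧ SDer AS (S \ {φ}) nφ

/-- Well-formedness: contraried formulas are neither axioms nor consequents of strict rules. -/
def WellFormed (AS : ArgSystem L) (K : KB L) : Prop :=
  ∀ φ ψ : L, contrary AS φ ψ → ψ ∉ K.Kn ∧ ∀ r ∈ AS.Rs, r.cons ≠ ψ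

/-- Well-definedness for SAFs. -/
def WellDefinedSAF (AS : ArgSystem L) (K : KB L) : Prop :=
  AxiomConsistent AS K ∧ WellFormed AS K ∧ (ContraClosed AS ∨ TransClosed AS)

/-- Well-definedness for c-SAFs. -/
def WellDefinedCSAF (AS : ArgSystem L) (K : KB L) : Prop :=
  WellDefinedSAF AS K ∧ CClassical AS

/-- The arguments of the SAF defined by `(AS,K)`: all (finite) arguments. -/
def ArgsSAF (AS : ArgSystem L) (K : KB L) : Set (Arg L) := {A | IsArg AS K A}

/-- The arguments of the c-SAF defined by `(AS,K)`: all (finite) c-consistent arguments. -/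
def ArgsCSAF (AS : ArgSystem L) (K : KB L) : Set (Arg L) :=
  {A | IsArg AS K A ∧ CCons AS A.premises}

/-- `A` undercuts `B` on `B'`. -/
def undercutsOn (AS : ArgSystem L) (A B B' : Arg L) : Prop :=
  B' ∈ B.subs ∧ ∃ r ∈ AS.Rd, B'.topRule = some r ∧ A.conc ∈ AS.contr (AS.nm r)

/-- `A` rebuts `B` on `B'`. -/
def rebutsOn (AS : ArgSystem L) (A B B' : Arg L) : Prop :=
  B' ∈ B.subs ∧ ∃ r ∈ AS.Rd, B'.topRule = some r ∧ A.conc ∈ AS.contr B'.conc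

/-- `A` undermines `B` on `B'`. -/
def underminesOn (AS : ArgSystem L) (K : KB L) (A B B' : Arg L) : Prop :=
  B' ∈ B.subs ∧ ∃ φ ∈ K.Kp, B' = Arg.prem φ ∧ A.conc ∈ AS.contr φ

/-- `A` attacks `B` on `B'`. -/
def attacksOn (AS : ArgSystem L) (K : KB L) (A B B' : Arg L) : Prop :=
  undercutsOn AS A B B' ∨ rebutsOn AS A B B' ∨ underminesOn AS K A B B'

/-- `A` attacks `B`. -/
def attacks (AS : ArgSystem L) (K : KB L) (A B : Arg L) : Prop :=
  ∃ B', attacksOn AS K A B B'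

/-- Preference-independent attacks: undercuts, contrary-rebuts and contrary-undermines. -/
def prefIndepOn (AS : ArgSystem L) (K : KB L) (A B B' : Arg L) : Prop :=
  undercutsOn AS A B B' ∨
  (rebutsOn AS A B B' ∧ contrary AS A.conc B'.conc) ∨
  (underminesOn AS K A B B' ∧ contrary AS A.conc B'.conc)

/-- Preference-dependent attacks. -/
def prefDepOn (AS : ArgSystem L) (K : KB L) (A B B' : Arg L) : Prop :=
  attacksOn AS K A B B' ∧ ¬ prefIndepOn AS K A B B'

/-- The strict counterpart `≺` of an ordering `⪯`. -/
def sprec (pre : Arg L → Arg L → Prop) (X Y : Arg L) : Prop := pre X Y ∧ ¬ pre Y X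

/-- `A` defeats `B`, relative to a strict preference relation `slt` (`≺`). -/
def defeats (AS : ArgSystem L) (K : KB L) (slt : Arg L → Arg L → Prop) (A B : Arg L) : Prop :=
  ∃ B', prefIndepOn AS K A B B' ∨ (prefDepOn AS K A B B' ∧ ¬ slt A B')

/-- `A` is a strict continuation of the set of arguments `Γ`. -/
def StrictCont (AS : ArgSystem L) (K : KB L) (A : Arg L) (Γ : Set (Arg L)) : Prop :=
  premP K A = (⋃ B ∈ Γ, premP K B) ∧
  defRules AS A = (⋃ B ∈ Γ, defRules AS B) ∧
  (⋃ B ∈ Γ, stRules AS B) ⊆ stRules AS A ∧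
  (⋃ B ∈ Γ, premN K B) ⊆ premN K A

/-- `B'` has a fallible top: a defeasible top rule, or an ordinary premise. -/
def fallibleTop (AS : ArgSystem L) (K : KB L) (B' : Arg L) : Prop :=
  (∃ r ∈ AS.Rd, B'.topRule = some r) ∨ (∃ φ ∈ K.Kp, B' = Arg.prem φ)

/-- `M(B)`: the maximal fallible sub-arguments of `B`. -/
def MSet (AS : ArgSystem L) (K : KB L) (B : Arg L) : Set (Arg L) :=
  {B' | B' ∈ B.subs ∧ fallibleTop AS K B' ∧
    ¬ ∃ B'', B'' ∈ B.subs ∧ B'' ≠ B ∧ B'' ≠ B' ∧ fallibleTop AS K B'' ∧ B' ∈ B''.subs}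

/-- A reasonable argument ordering. -/
def Reasonable (AS : ArgSystem L) (K : KB L) (pre : Arg L → Arg L → Prop) : Prop :=
  (∀ A B : Arg L, strictArg AS A → firmArg K A →
      (¬ firmArg K B ∨ ¬ strictArg AS B) → sprec pre B A) ∧
  (∀ A B : Arg L, strictArg AS B → firmArg K B → ¬ sprec pre B A) ∧
  (∀ A A' B : Arg L, StrictCont AS K A' {A} →
      (¬ sprec pre A B → ¬ sprec pre A' B) ∧ (¬ sprec pre B A → ¬ sprec pre B A')) ∧
  (∀ s : Finset (Arg L), s.Nonempty → ∀ f : Arg L → Arg L,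
      (∀ C ∈ s, StrictCont AS K (f C) ((↑s : Set (Arg L)) \ {C})) →
      ¬ (∀ C ∈ s, sprec pre (f C) C))

/-- Conflict-freeness of `S` with respect to a relation (attack or defeat). -/
def CFwrt (rel : Arg L → Arg L → Prop) (S : Set (Arg L)) : Prop :=
  ∀ X ∈ S, ∀ Y ∈ S, ¬ rel X Y

/-- `A` is acceptable with respect to `S` (all its defeaters in `𝒜` are defeated from `S`). -/
def Acceptable (𝒜 : Set (Arg L)) (df : Arg L → Arg L → Prop)
    (S : Set (Arg L)) (A : Arg L) : Prop :=
  ∀ B ∈ 𝒜, df B A → ∃ C ∈ S, df C B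

/-- Admissible sets, relative to a conflict-freeness notion `cf` and defeat relation `df`. -/
def Admissible (𝒜 : Set (Arg L)) (cf : Set (Arg L) → Prop)
    (df : Arg L → Arg L → Prop) (S : Set (Arg L)) : Prop :=
  S ⊆ 𝒜 ∧ cf S ∧ ∀ A ∈ S, Acceptable 𝒜 df S A

/-- Complete extensions. -/
def Complete (𝒜 : Set (Arg L)) (cf : Set (Arg L) → Prop)
    (df : Arg L → Arg L → Prop) (S : Set (Arg L)) : Prop :=
  Admissible 𝒜 cf df S ∧ ∀ A ∈ 𝒜, Acceptable 𝒜 df S A → A ∈ S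

/-- Preferred extensions: ⊆-maximal complete extensions. -/
def Preferred (𝒜 : Set (Arg L)) (cf : Set (Arg L) → Prop)
    (df : Arg L → Arg L → Prop) (S : Set (Arg L)) : Prop :=
  Complete 𝒜 cf df S ∧ ∀ S', Complete 𝒜 cf df S' → S ⊆ S' → S' = S

/-- The grounded extension: the ⊆-minimal complete extension. -/
def Grounded (𝒜 : Set (Arg L)) (cf : Set (Arg L) → Prop)
    (df : Arg L → Arg L → Prop) (S : Set (Arg L)) : Prop :=
  Complete 𝒜 cf df S ∧ ∀ S', Complete 𝒜 cf df S' → S ⊆ S'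

/-- Stable extensions. -/
def Stable (𝒜 : Set (Arg L)) (cf : Set (Arg L) → Prop)
    (df : Arg L → Arg L → Prop) (S : Set (Arg L)) : Prop :=
  Preferred 𝒜 cf df S ∧ ∀ B ∈ 𝒜, B ∉ S → ∃ A ∈ S, df A B

/-- The set of antecedents of a rule. -/
def antsSet {L : Type} (r : InfRule L) : Set L := {φ | φ ∈ r.ants}

end ASPIC
namespace ASPIC

/-- The axioms of a set comparison relation: the empty set is not below anything,
and any nonempty (finite) set is below the empty set. -/
def SetCompAxioms {β : Type} (cmp : Set β → Set β → Prop) : Prop :=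
  (∀ Γ' : Set β, ¬ cmp ∅ Γ') ∧ (∀ Γ : Set β, Γ ≠ ∅ → Γ.Finite → cmp Γ ∅)

/-- A set comparison is a strict partial order (on finite sets): irreflexive and transitive. -/
def StrictPartialCmp {β : Type} (cmp : Set β → Set β → Prop) : Prop :=
  (∀ Γ : Set β, Γ.Finite → ¬ cmp Γ Γ) ∧
  (∀ Γ₁ Γ₂ Γ₃ : Set β, Γ₁.Finite → Γ₂.Finite → Γ₃.Finite →
      cmp Γ₁ Γ₂ → cmp Γ₂ Γ₃ → cmp Γ₁ Γ₃)

/-- A set comparison is reasonable inducing: a strict partial order such that whenever a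
finite union of finite sets is below `Γ`, some member of the union is below `Γ`. -/
def ReasonableInducing {β : Type} (cmp : Set β → Set β → Prop) : Prop :=
  StrictPartialCmp cmp ∧
  ∀ (m : ℕ) (G : Fin m → Set β) (Γ : Set β), (∀ i, (G i).Finite) → Γ.Finite →
    cmp (⋃ i, G i) Γ → ∃ i, cmp (G i) Γ

/-- The strict counterpart of a preorder. -/
def ltOf {α : Type} (le : α → α → Prop) (x y : α) : Prop := le x y ∧ ¬ le y x

/-- The Elitist set comparison induced by a preorder `le`. -/
def eliCmp {α : Type} (le : α → α → Prop) (Γ Γ' : Set α) : Prop :=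
  Γ ≠ ∅ ∧ (Γ' = ∅ ∨ ∃ X ∈ Γ, ∀ Y ∈ Γ', ltOf le X Y)

/-- The Democratic set comparison induced by a preorder `le`. -/
def demCmp {α : Type} (le : α → α → Prop) (Γ Γ' : Set α) : Prop :=
  Γ ≠ ∅ ∧ (Γ' = ∅ ∨ ∀ X ∈ Γ, ∃ Y ∈ Γ', ltOf le X Y)

variable {L : Type}

/-- The strict argument ordering by the last-link principle, relative to set
comparisons `cmpR` on rule sets and `cmpP` on premise sets. -/
def lastLinkLt (AS : ArgSystem L) (K : KB L)
    (cmpR : Set (InfRule L) → Set (InfRule L) → Prop)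
    (cmpP : Set L → Set L → Prop) (B A : Arg L) : Prop :=
  cmpR (B.lastDefRules AS.Rd) (A.lastDefRules AS.Rd) ∨
  (B.lastDefRules AS.Rd = ∅ ∧ A.lastDefRules AS.Rd = ∅ ∧ cmpP (premP K B) (premP K A))

/-- The argument ordering `⪯` by the last-link principle. -/
def lastLinkLe (AS : ArgSystem L) (K : KB L)
    (cmpR : Set (InfRule L) → Set (InfRule L) → Prop)
    (cmpP : Set L → Set L → Prop) (B A : Arg L) : Prop :=
  lastLinkLt AS K cmpR cmpP B A ∨
  (A.lastDefRules AS.Rd ≠ ∅ ∧ A.lastDefRules AS.Rd = B.lastDefRules AS.Rd) ∨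
  (A.lastDefRules AS.Rd = ∅ ∧ premP K A = premP K B)

/-- The strict argument ordering by the weakest-link principle. -/
def weakestLinkLt (AS : ArgSystem L) (K : KB L)
    (cmpR : Set (InfRule L) → Set (InfRule L) → Prop)
    (cmpP : Set L → Set L → Prop) (B A : Arg L) : Prop :=
  (strictArg AS B ∧ strictArg AS A ∧ cmpP (premP K B) (premP K A)) ∨
  (¬ (strictArg AS B ∧ strictArg AS A) ∧ firmArg K B ∧ firmArg K A ∧
    cmpR (defRules AS B) (defRules AS A)) ∨
  (¬ (strictArg AS B ∧ strictArg AS A) ∧ ¬ (firmArg K B ∧ firmArg K A) ∧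
    cmpP (premP K B) (premP K A) ∧ cmpR (defRules AS B) (defRules AS A))

/-- The argument ordering `⪯` by the weakest-link principle. -/
def weakestLinkLe (AS : ArgSystem L) (K : KB L)
    (cmpR : Set (InfRule L) → Set (InfRule L) → Prop)
    (cmpP : Set L → Set L → Prop) (B A : Arg L) : Prop :=
  weakestLinkLt AS K cmpR cmpP B A ∨
  (defRules AS A = defRules AS B ∧ premP K A = premP K B)

end ASPIC
namespace ASPIC

/-! A nonempty finite set has an element with nothing strictly above it in the set, so no
nonempty finite `Γ` satisfies `Γ ◁_Dem Γ`. Witnesses compose by transitivity of `<`. Finally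
`◁_Dem` only gets easier on the left when passing to a nonempty subset, and some `Γᵢ` of a
nonempty union is nonempty. -/

section Democratic

variable {α : Type} {le : α → α → Prop}

theorem ltOf_trans (htrans : ∀ x y z, le x y → le y z → le x z) {x y z : α}
    (hxy : ltOf le x y) (hyz : ltOf le y z) : ltOf le x z :=
  ⟨htrans x y z hxy.1 hyz.1, fun hzx => hxy.2 (htrans y z x hyz.1 hzx)⟩

theorem exists_forall_not_ltOf_of_finite (htrans : ∀ x y z, le x y → le y z → le x z)
    {s : Set α} (hs : s.Finite) (hne : s.Nonempty) : ∃ x ∈ s, ∀ y ∈ s, ¬ ltOf le x y := by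
  -- `Set.Finite.exists_maximal` asks only for a transitive `≤`, so `le` itself can serve.
  let : LE α := ⟨le⟩
  have : IsTrans α (· ≤ ·) := ⟨htrans⟩
  obtain ⟨x, hx⟩ := hs.exists_maximal hne
  exact ⟨x, hx.prop, fun y hy hxy => hxy.2 (hx.2 hy hxy.1)⟩

theorem demCmp_irrefl (htrans : ∀ x y z, le x y → le y z → le x z) {Γ : Set α}
    (hΓ : Γ.Finite) : ¬ demCmp le Γ Γ := by
  rintro ⟨hne, hempty | hlt⟩
  · exact hne hempty
  · obtain ⟨x, hx, hmax⟩ :=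
      exists_forall_not_ltOf_of_finite htrans hΓ (Set.nonempty_iff_ne_empty.2 hne)
    obtain ⟨y, hy, hxy⟩ := hlt x hx
    exact hmax y hy hxy

theorem demCmp_trans (htrans : ∀ x y z, le x y → le y z → le x z) {Γ₁ Γ₂ Γ₃ : Set α}
    (h₁₂ : demCmp le Γ₁ Γ₂) (h₂₃ : demCmp le Γ₂ Γ₃) : demCmp le Γ₁ Γ₃ := by
  obtain ⟨hne₁, hempty₂ | hlt₁₂⟩ := h₁₂
  · exact absurd hempty₂ h₂₃.1
  obtain ⟨-, hempty₃ | hlt₂₃⟩ := h₂₃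
  · exact ⟨hne₁, Or.inl hempty₃⟩
  refine ⟨hne₁, Or.inr fun X hX => ?_⟩
  obtain ⟨Y, hY, hXY⟩ := hlt₁₂ X hX
  obtain ⟨Z, hZ, hYZ⟩ := hlt₂₃ Y hY
  exact ⟨Z, hZ, ltOf_trans htrans hXY hYZ⟩

theorem demCmp_of_subset {Γ₀ Γ₁ Γ : Set α} (hsub : Γ₀ ⊆ Γ₁) (hne : Γ₀.Nonempty)
    (h : demCmp le Γ₁ Γ) : demCmp le Γ₀ Γ :=
  ⟨hne.ne_empty, h.2.imp_right fun hlt X hX => hlt X (hsub hX)⟩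

end Democratic

/-- Proposition 11: for every preorder `le`, the Democratic set comparison
is reasonable inducing: on finite sets it is irreflexive and transitive, and whenever
`Γ1 ∪ … ∪ Γm ◁_Dem Γ`, then `Γi ◁_Dem Γ` for some `i`. -/
theorem statement12 {α : Type} (le : α → α → Prop)
    (hrefl : ∀ x, le x x) (htrans : ∀ x y z, le x y → le y z → le x z) :
    ReasonableInducing (demCmp le) := by
  refine ⟨⟨fun _ hΓ => demCmp_irrefl htrans hΓ, fun _ _ _ _ _ _ => demCmp_trans htrans⟩, ?_⟩
  rintro m G Γ - - hG
  obtain ⟨x, hx⟩ := Set.nonempty_iff_ne_empty.2 hG.1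
  obtain ⟨i, hxi⟩ := Set.mem_iUnion.1 hx
  exact ⟨i, demCmp_of_subset (Set.subset_iUnion G i) ⟨x, hxi⟩ hG⟩

end ASPIC
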